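/- Let G be a finite simple graph possessing an edge e = {u, v} such that N_G(u) ⊆ N_G[v] or N_G(v) ⊆ N_G[u]. Then v(J(G)) ≤ bight(I(G)) − 1, where bight(I(G)) equals the maximum cardinality of a minimal vertex cover of G. -/

import Mathlib

open MvPolynomial CategoryTheory

noncomputable section

/-- A set of vertices is a vertex cover if it meets every edge. -/
def IsVertexCover {V : Type} (G : SimpleGraph V) (C : Set V) : Prop :=
  ∀ ⦃u v : V⦄, G.Adj u v → u ∈ C ∨ v ∈ C

/-- A vertex cover minimal with respect to inclusion. -/
def IsMinimalVertexCover {V : Type} (G : SimpleGraph V) (C : Set V) : Prop :=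
  IsVertexCover G C ∧ ∀ C' ⊆ C, IsVertexCover G C' → C' = C

/-- `α₀(G)`: the minimum cardinality of a vertex cover of `G`. -/
def coverNumber {V : Type} (G : SimpleGraph V) : ℕ :=
  sInf {k | ∃ C : Set V, IsVertexCover G C ∧ C.ncard = k}

/-- `bight(I(G))`: the maximum cardinality of a minimal vertex cover of `G`. -/
def bigHeight {V : Type} (G : SimpleGraph V) : ℕ :=
  sSup {k | ∃ C : Set V, IsMinimalVertexCover G C ∧ C.ncard = k}

/-- The edge ideal `I(G) ⊆ K[x_v : v ∈ V]`, generated by the monomials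
`x_u * x_v` over the edges `{u,v}` of `G`. -/
def edgeIdeal (K : Type) [Field K] {V : Type} (G : SimpleGraph V) :
    Ideal (MvPolynomial V K) :=
  Ideal.span {m | ∃ u v : V, G.Adj u v ∧ m = X u * X v}

/-- The cover ideal `J(G) = ⋂_{{u,v} ∈ E(G)} ⟨x_u, x_v⟩`. -/
def coverIdeal (K : Type) [Field K] {V : Type} (G : SimpleGraph V) :
    Ideal (MvPolynomial V K) :=
  ⨅ (u : V) (v : V) (_ : G.Adj u v), Ideal.span {X u, X v}

/-- The v-number of a graded ideal `I`: the least `d ≥ 0` such that there is a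
homogeneous polynomial `f` of degree `d` with `I : f` a prime ideal. -/
def vNumber {K : Type} [Field K] {V : Type} (I : Ideal (MvPolynomial V K)) : ℕ :=
  sInf {d | ∃ f : MvPolynomial V K, f.IsHomogeneous d ∧
    (I.colon (Ideal.span {f})).IsPrime}

/-- The homogeneous maximal ideal `⟨x_1, …, x_n⟩` of the polynomial ring. -/
def maxIdeal (K : Type) [Field K] (V : Type) : Ideal (MvPolynomial V K) :=
  Ideal.span (Set.range (X : V → MvPolynomial V K))

/-- The depth of the module `M` with respect to the ideal `J`: the supremum of
the lengths of regular sequences on `M` consisting of elements of `J`. -/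
def mdepth {R : Type} [CommRing R] (J : Ideal R) (M : Type) [AddCommGroup M]
    [Module R M] : ℕ :=
  sSup {k | ∃ rs : List R, rs.length = k ∧ (∀ r ∈ rs, r ∈ J) ∧
    RingTheory.Sequence.IsRegular M rs}

/-- The projective dimension of an `R`-module `M`, characterized by the
vanishing of `Ext^i(M, N)` for all `i > d` and all modules `N`. -/
def projDim (R : Type) [CommRing R] (M : ModuleCat.{0} R) : ℕ :=
  sInf {d : ℕ | ∀ (N : ModuleCat.{0} R) (i : ℕ), d < i →
    Subsingleton (((Ext R (ModuleCat.{0} R) i).obj (Opposite.op M)).obj N)}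

/-!
Assume `N(u) ⊆ N[v]` and let `C` be a minimal vertex cover avoiding `v`; it contains `u`.
For `f = ∏_{w ∈ C \ {u}} x_w`, both `x_u f` and `x_v f` are monomials of vertex covers (`C` and
`(C \ {u}) ∪ {v}`), hence lie in `J(G)`, while `f ∉ ⟨x_u, x_v⟩ ⊇ J(G)`. Since `⟨x_u, x_v⟩` is
prime, `J(G) : f = ⟨x_u, x_v⟩`, so `v(J(G)) ≤ deg f = |C| - 1 ≤ bight(I(G)) - 1`.
-/

namespace MvPolynomial

variable {σ R : Type*} [CommRing R]

theorem sub_aeval_indicator_compl_X_mem_span_X_image (t : Set σ) (p : MvPolynomial σ R) :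
    p - aeval (tᶜ.indicator X) p ∈ Ideal.span (X '' t) := by
  induction p using MvPolynomial.induction_on with
  | C a => simp
  | add p q hp hq => simpa [add_sub_add_comm] using add_mem hp hq
  | mul_X p w hp =>
    by_cases hw : w ∈ t
    · rw [map_mul, aeval_X, Set.indicator_of_notMem (Set.notMem_compl_iff.2 hw), mul_zero,
        sub_zero]
      exact Ideal.mul_mem_left _ p (Ideal.subset_span ⟨w, hw, rfl⟩)
    · rw [map_mul, aeval_X, Set.indicator_of_mem (Set.mem_compl hw), ← sub_mul]
      exact Ideal.mul_mem_right _ _ hp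

theorem ker_aeval_indicator_compl_X (t : Set σ) :
    RingHom.ker (aeval (tᶜ.indicator X) : MvPolynomial σ R →ₐ[R] MvPolynomial σ R) =
      Ideal.span (X '' t) := by
  refine le_antisymm (fun p hp => ?_) (Ideal.span_le.2 ?_)
  · have h := sub_aeval_indicator_compl_X_mem_span_X_image t p
    rwa [RingHom.mem_ker.1 hp, sub_zero] at h
  · rintro _ ⟨w, hw, rfl⟩
    simp [hw]

theorem isPrime_span_X_image [IsDomain R] (t : Set σ) :
    (Ideal.span (X '' t : Set (MvPolynomial σ R))).IsPrime :=
  ker_aeval_indicator_compl_X (R := R) t ▸ RingHom.ker_isPrime _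

theorem prod_X_mem_span_X_image_iff [Nontrivial R] (s : Finset σ) (t : Set σ) :
    ∏ w ∈ s, X w ∈ Ideal.span (X '' t : Set (MvPolynomial σ R)) ↔ ∃ w ∈ s, w ∈ t := by
  classical
  have hmon : ∏ w ∈ s, (X w : MvPolynomial σ R) = monomial (∑ w ∈ s, Finsupp.single w 1) 1 := by
    rw [monomial_sum_one]; rfl
  rw [hmon, mem_ideal_span_X_image, support_monomial, if_neg one_ne_zero]
  simp [Finsupp.finsetSum_apply, Finsupp.single_apply, and_comm]

theorem prod_X_mem_span_X_pair_iff [Nontrivial R] (s : Finset σ) (a b : σ) :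
    ∏ w ∈ s, X w ∈ Ideal.span {(X a : MvPolynomial σ R), X b} ↔ a ∈ s ∨ b ∈ s := by
  rw [← Set.image_pair, prod_X_mem_span_X_image_iff]
  simp only [Set.mem_insert_iff, Set.mem_singleton_iff, and_or_left, exists_or, exists_eq_right]

theorem isHomogeneous_prod_X (s : Finset σ) :
    (∏ w ∈ s, X w : MvPolynomial σ R).IsHomogeneous s.card := by
  simpa using IsHomogeneous.prod s X (fun _ => 1) fun w _ => isHomogeneous_X R w

end MvPolynomial

theorem Ideal.colon_span_singleton_le_of_le_of_notMem {R : Type*} [CommRing R] {I P : Ideal R}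
    [hP : P.IsPrime] {f : R} (hIP : I ≤ P) (hf : f ∉ P) : I.colon (Ideal.span {f}) ≤ P :=
  fun _ hr => (hP.mem_or_mem (hIP (Ideal.mem_colon_span_singleton.1 hr))).resolve_right hf

section Graph

variable {V : Type} {G : SimpleGraph V}

theorem isVertexCover_compl_singleton (G : SimpleGraph V) (v : V) : IsVertexCover G {v}ᶜ := by
  intro a b hab
  rcases eq_or_ne a v with rfl | ha
  · exact Or.inr hab.ne'
  · exact Or.inl ha

theorem IsVertexCover.insert_diff_singleton {C : Set V} {u v : V} (hC : IsVertexCover G C)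
    (hv : v ∉ C) (hN : G.neighborSet u ⊆ insert v (G.neighborSet v)) :
    IsVertexCover G (insert v (C \ {u})) := by
  have hu : ∀ w, G.Adj u w → w ∈ insert v (C \ {u}) := by
    intro w hw
    rcases Set.mem_insert_iff.1 (hN hw) with rfl | hvw
    · exact Set.mem_insert _ _
    · exact Set.mem_insert_of_mem _ ⟨(hC hvw).resolve_left hv, hw.ne'⟩
  intro a b hab
  by_cases ha : a = u
  · exact Or.inr (hu b (ha ▸ hab))
  by_cases hb : b = u
  · exact Or.inl (hu a (hb ▸ hab.symm))
  exact (hC hab).imp (fun h => Set.mem_insert_of_mem _ ⟨h, ha⟩)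
    (fun h => Set.mem_insert_of_mem _ ⟨h, hb⟩)

theorem IsVertexCover.exists_isMinimalVertexCover_subset [Finite V] {C : Set V}
    (hC : IsVertexCover G C) : ∃ D ⊆ C, IsMinimalVertexCover G D := by
  obtain ⟨D, hDC, hD⟩ := exists_minimal_le_of_wellFoundedLT (IsVertexCover G) C hC
  exact ⟨D, hDC, hD.1, fun D' hD' hcov => (hD.eq_of_le hcov hD')⟩

theorem IsMinimalVertexCover.ncard_le_bigHeight [Finite V] {C : Set V}
    (hC : IsMinimalVertexCover G C) : C.ncard ≤ bigHeight G :=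
  le_csSup ⟨Nat.card V, by rintro _ ⟨D, -, rfl⟩; exact Set.ncard_le_card D⟩ ⟨C, hC, rfl⟩

variable (K : Type) [Field K]

theorem mem_coverIdeal {p : MvPolynomial V K} :
    p ∈ coverIdeal K G ↔ ∀ a b, G.Adj a b → p ∈ Ideal.span {X a, X b} := by
  simp [coverIdeal]

theorem coverIdeal_le_span_X_pair {a b : V} (hab : G.Adj a b) :
    coverIdeal K G ≤ Ideal.span {X a, X b} :=
  fun _ hp => (mem_coverIdeal K).1 hp a b hab

theorem IsVertexCover.prod_X_mem_coverIdeal {s : Finset V} (hs : IsVertexCover G s) :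
    ∏ w ∈ s, X w ∈ coverIdeal K G :=
  (mem_coverIdeal K).2 fun _ _ hab => (MvPolynomial.prod_X_mem_span_X_pair_iff s _ _).2 (hs hab)

end Graph

theorem vNumber_coverIdeal_le_bigHeight_sub_one_of_neighborSet_subset {K V : Type} [Field K]
    [Finite V] {G : SimpleGraph V} {u v : V} (huv : G.Adj u v)
    (hN : G.neighborSet u ⊆ insert v (G.neighborSet v)) :
    vNumber (coverIdeal K G) ≤ bigHeight G - 1 := by
  classical
  have := Fintype.ofFinite V
  obtain ⟨C, hCv, hC⟩ := (isVertexCover_compl_singleton G v).exists_isMinimalVertexCover_subset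
  have hvC : v ∉ C := fun h => hCv h rfl
  have huC : u ∈ C := (hC.1 huv).resolve_right hvC
  set s := C.toFinset.erase u
  set P : Ideal (MvPolynomial V K) := Ideal.span {X u, X v}
  have hP : P.IsPrime := by
    simpa only [P, Set.image_pair] using MvPolynomial.isPrime_span_X_image (R := K) {u, v}
  have hcolon : (coverIdeal K G).colon (Ideal.span {∏ w ∈ s, (X w : MvPolynomial V K)}) = P := by
    refine le_antisymm (Ideal.colon_span_singleton_le_of_le_of_notMem
      (coverIdeal_le_span_X_pair K huv) ?_) ?_
    · simp [P, MvPolynomial.prod_X_mem_span_X_pair_iff, s, hvC]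
    rw [Ideal.span_le]
    rintro _ (rfl | rfl) <;> rw [SetLike.mem_coe, Ideal.mem_colon_span_singleton]
    · rw [Finset.mul_prod_erase _ _ (Set.mem_toFinset.2 huC)]
      exact IsVertexCover.prod_X_mem_coverIdeal K (by simpa using hC.1)
    · rw [← Finset.prod_insert (by simp [s, hvC])]
      exact IsVertexCover.prod_X_mem_coverIdeal K
        (by simpa [s] using hC.1.insert_diff_singleton hvC hN)
  calc vNumber (coverIdeal K G) ≤ s.card :=
        Nat.sInf_le ⟨_, MvPolynomial.isHomogeneous_prod_X s, hcolon ▸ hP⟩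
    _ = C.ncard - 1 := by
        rw [Finset.card_erase_of_mem (Set.mem_toFinset.2 huC), Set.ncard_eq_toFinset_card']
    _ ≤ bigHeight G - 1 := Nat.sub_le_sub_right hC.ncard_le_bigHeight 1

theorem vNumber_coverIdeal_le_bigHeight_sub_one_general
    {K : Type} [Field K] {n : ℕ} (G : SimpleGraph (Fin n))
    (u v : Fin n) (huv : G.Adj u v)
    (hN : G.neighborSet u ⊆ insert v (G.neighborSet v) ∨
      G.neighborSet v ⊆ insert u (G.neighborSet u)) :
    vNumber (coverIdeal K G) ≤ bigHeight G - 1 := by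
  rcases hN with hN | hN
  · exact vNumber_coverIdeal_le_bigHeight_sub_one_of_neighborSet_subset huv hN
  · exact vNumber_coverIdeal_le_bigHeight_sub_one_of_neighborSet_subset huv.symm hN

/-- If `G` has an edge `{u,v}` with `N_G(u) ⊆ N_G[v]` or `N_G(v) ⊆ N_G[u]`,
then `v(J(G)) ≤ bight(I(G)) - 1`. -/
theorem vNumber_coverIdeal_le_bigHeight_sub_one
    {K : Type} [Field K] {n : ℕ} (hn : 1 ≤ n) (G : SimpleGraph (Fin n))
    (u v : Fin n) (huv : G.Adj u v)
    (hN : G.neighborSet u ⊆ insert v (G.neighborSet v) ∨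
      G.neighborSet v ⊆ insert u (G.neighborSet u)) :
    vNumber (coverIdeal K G) ≤ bigHeight G - 1 :=
  vNumber_coverIdeal_le_bigHeight_sub_one_general G u v huv hN

end
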